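/- Let S be a polyomino and G_S ⊆ ℝ × ℝ the union of its closed cells, where ℝ × ℝ carries the sup-metric so that Metric.closedBall p (1/2) is the closed axis-parallel unit square centered at p. Then the free patrolling region { p ∈ ℝ × ℝ : Metric.closedBall p (1/2) ⊆ G_S } equals the union of: (i) the centers c + (1/2, 1/2) of all cells c ∈ S; (ii) the closed segments joining the centers of each pair of cells of S at ℓ¹-distance 1; and (iii) for each v ∈ ℤ × ℤ with all of v, v+(1,0), v+(0,1), v+(1,1) in S, the closed unit square [v₁ + 1/2, v₁ + 3/2] × [v₂ + 1/2, v₂ + 3/2] whose corners are the four cell centers of that 2×2 block. -/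
import Mathlib


/-- Two cells of `ℤ × ℤ` are adjacent if they are at `ℓ¹`-distance 1. -/
def AdjCells (c d : ℤ × ℤ) : Prop := |c.1 - d.1| + |c.2 - d.2| = 1

/-- The closed unit square of the cell `c`. -/
def cellSquare (c : ℤ × ℤ) : Set (ℝ × ℝ) :=
  Set.Icc (c.1 : ℝ) ((c.1 : ℝ) + 1) ×ˢ Set.Icc (c.2 : ℝ) ((c.2 : ℝ) + 1)

/-- The grid domain: the union of the closed cells of the polyomino `S`. -/
def gridDomain (S : Finset (ℤ × ℤ)) : Set (ℝ × ℝ) :=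
  ⋃ c ∈ S, cellSquare c

/-- The center of the cell `c`. -/
noncomputable def cellCenter (c : ℤ × ℤ) : ℝ × ℝ := ((c.1 : ℝ) + 1 / 2, (c.2 : ℝ) + 1 / 2)

lemma sqBall_eq (p : ℝ × ℝ) :
    Metric.closedBall p (1/2 : ℝ) =
      Set.Icc (p.1 - 1/2) (p.1 + 1/2) ×ˢ Set.Icc (p.2 - 1/2) (p.2 + 1/2) := by
  rw [show p = (p.1, p.2) from rfl, ← closedBall_prod_same,
    Real.closedBall_eq_Icc, Real.closedBall_eq_Icc]

lemma exists_good_int {x u : ℝ} (h1 : x - 1/2 ≤ u) (h2 : u ≤ x + 1/2) :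
    ∃ a : ℤ, (a:ℝ) ≤ u ∧ u ≤ a + 1 ∧ (a:ℝ) < x + 1/2 ∧ x - 3/2 < a := by
  rcases lt_or_eq_of_le h2 with h2' | h2'
  · exact ⟨⌊u⌋, Int.floor_le u, by linarith [Int.lt_floor_add_one u],
      lt_of_le_of_lt (Int.floor_le u) h2', by linarith [Int.sub_one_lt_floor u]⟩
  · refine ⟨⌈u⌉ - 1, ?_, ?_, ?_, ?_⟩ <;> push_cast
    · linarith [Int.ceil_lt_add_one u]
    · linarith [Int.le_ceil u]
    · linarith [Int.ceil_lt_add_one u]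
    · linarith [Int.le_ceil u]

lemma key (S : Finset (ℤ × ℤ)) (p : ℝ × ℝ) :
    Metric.closedBall p (1/2) ⊆ gridDomain S ↔
      ∀ a b : ℤ, (a:ℝ) < p.1 + 1/2 → p.1 - 3/2 < a →
        (b:ℝ) < p.2 + 1/2 → p.2 - 3/2 < b → (a, b) ∈ S := by
  rw [sqBall_eq]
  constructor
  · intro h a b ha1 ha2 hb1 hb2
    set u := (max (a:ℝ) (p.1 - 1/2) + min ((a:ℝ)+1) (p.1+1/2)) / 2 with hu
    set v := (max (b:ℝ) (p.2 - 1/2) + min ((b:ℝ)+1) (p.2+1/2)) / 2 with hv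
    have hLR : max (a:ℝ) (p.1 - 1/2) < min ((a:ℝ)+1) (p.1+1/2) :=
      max_lt (lt_min (by linarith) ha1) (lt_min (by linarith) (by linarith))
    have hLR' : max (b:ℝ) (p.2 - 1/2) < min ((b:ℝ)+1) (p.2+1/2) :=
      max_lt (lt_min (by linarith) hb1) (lt_min (by linarith) (by linarith))
    have hm1 := le_max_left (a:ℝ) (p.1 - 1/2)
    have hm2 := le_max_right (a:ℝ) (p.1 - 1/2)
    have hm3 := min_le_left ((a:ℝ)+1) (p.1+1/2)
    have hm4 := min_le_right ((a:ℝ)+1) (p.1+1/2)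
    have hn1 := le_max_left (b:ℝ) (p.2 - 1/2)
    have hn2 := le_max_right (b:ℝ) (p.2 - 1/2)
    have hn3 := min_le_left ((b:ℝ)+1) (p.2+1/2)
    have hn4 := min_le_right ((b:ℝ)+1) (p.2+1/2)
    have hmem : (u, v) ∈ Set.Icc (p.1 - 1/2) (p.1 + 1/2) ×ˢ Set.Icc (p.2 - 1/2) (p.2 + 1/2) :=
      ⟨⟨by rw [hu]; linarith, by rw [hu]; linarith⟩, ⟨by rw [hv]; linarith, by rw [hv]; linarith⟩⟩
    obtain ⟨c, hcS, hc⟩ := Set.mem_iUnion₂.mp (h hmem)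
    obtain ⟨⟨hc1, hc2⟩, hc3, hc4⟩ := hc
    have hau : (a:ℝ) < u := by rw [hu]; linarith
    have hua : u < (a:ℝ) + 1 := by rw [hu]; linarith
    have hbv : (b:ℝ) < v := by rw [hv]; linarith
    have hvb : v < (b:ℝ) + 1 := by rw [hv]; linarith
    have e1 : c.1 = a := by
      have h1 : (c.1:ℝ) < (a:ℝ) + 1 := lt_of_le_of_lt hc1 hua
      have h2 : (a:ℝ) < (c.1:ℝ) + 1 := lt_of_lt_of_le hau hc2
      have h1' : c.1 < a + 1 := by exact_mod_cast h1
      have h2' : a < c.1 + 1 := by exact_mod_cast h2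
      omega
    have e2 : c.2 = b := by
      have h1 : (c.2:ℝ) < (b:ℝ) + 1 := lt_of_le_of_lt hc3 hvb
      have h2 : (b:ℝ) < (c.2:ℝ) + 1 := lt_of_lt_of_le hbv hc4
      have h1' : c.2 < b + 1 := by exact_mod_cast h1
      have h2' : b < c.2 + 1 := by exact_mod_cast h2
      omega
    have : c = (a, b) := Prod.ext e1 e2
    rwa [this] at hcS
  · intro h q hq
    obtain ⟨⟨hq1, hq2⟩, hq3, hq4⟩ := hq
    obtain ⟨a, ha1, ha2, ha3, ha4⟩ := exists_good_int hq1 hq2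
    obtain ⟨b, hb1, hb2, hb3, hb4⟩ := exists_good_int hq3 hq4
    exact Set.mem_biUnion (h a b ha3 ha4 hb3 hb4) ⟨⟨ha1, ha2⟩, ⟨hb1, hb2⟩⟩

lemma seg_horiz (S : Finset (ℤ × ℤ)) (c : ℤ × ℤ) (hc : c ∈ S) (hd : (c.1 + 1, c.2) ∈ S)
    {p : ℝ × ℝ} (hp : p ∈ segment ℝ (cellCenter c) (cellCenter (c.1 + 1, c.2))) :
    ∀ a b : ℤ, (a:ℝ) < p.1 + 1/2 → p.1 - 3/2 < a →
      (b:ℝ) < p.2 + 1/2 → p.2 - 3/2 < b → (a, b) ∈ S := by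
  obtain ⟨u, v, hu, hv, huv, heq⟩ := hp
  simp only [cellCenter, Prod.smul_mk, Prod.mk_add_mk, smul_eq_mul, Prod.ext_iff] at heq
  push_cast at heq
  obtain ⟨he1, he2⟩ := heq
  have hxv : p.1 = (c.1:ℝ) + 1/2 + v := by
    linear_combination (-1) * he1 + ((c.1:ℝ) + 1/2) * huv
  have hy : p.2 = (c.2:ℝ) + 1/2 := by
    linear_combination (-1) * he2 + ((c.2:ℝ) + 1/2) * huv
  have hx1 : (c.1:ℝ) + 1/2 ≤ p.1 := by linarith
  have hx2 : p.1 ≤ (c.1:ℝ) + 3/2 := by linarith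
  intro a b ha1 ha2 hb1 hb2
  have A1 : a < c.1 + 2 := by exact_mod_cast (show (a:ℝ) < (c.1:ℝ) + 2 by push_cast; linarith)
  have A2 : c.1 - 1 < a := by exact_mod_cast (show (c.1:ℝ) - 1 < a by push_cast; linarith)
  have B1 : b < c.2 + 1 := by exact_mod_cast (show (b:ℝ) < (c.2:ℝ) + 1 by push_cast; linarith)
  have B2 : c.2 - 1 < b := by exact_mod_cast (show (c.2:ℝ) - 1 < b by push_cast; linarith)
  have hb : b = c.2 := by omega
  have ha : a = c.1 ∨ a = c.1 + 1 := by omega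
  rcases ha with ha | ha
  · have : (a, b) = c := Prod.ext ha hb
    rwa [this]
  · have : (a, b) = (c.1 + 1, c.2) := Prod.ext ha hb
    rwa [this]

lemma seg_vert (S : Finset (ℤ × ℤ)) (c : ℤ × ℤ) (hc : c ∈ S) (hd : (c.1, c.2 + 1) ∈ S)
    {p : ℝ × ℝ} (hp : p ∈ segment ℝ (cellCenter c) (cellCenter (c.1, c.2 + 1))) :
    ∀ a b : ℤ, (a:ℝ) < p.1 + 1/2 → p.1 - 3/2 < a →
      (b:ℝ) < p.2 + 1/2 → p.2 - 3/2 < b → (a, b) ∈ S := by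
  obtain ⟨u, v, hu, hv, huv, heq⟩ := hp
  simp only [cellCenter, Prod.smul_mk, Prod.mk_add_mk, smul_eq_mul, Prod.ext_iff] at heq
  push_cast at heq
  obtain ⟨he1, he2⟩ := heq
  have hyv : p.2 = (c.2:ℝ) + 1/2 + v := by
    linear_combination (-1) * he2 + ((c.2:ℝ) + 1/2) * huv
  have hx : p.1 = (c.1:ℝ) + 1/2 := by
    linear_combination (-1) * he1 + ((c.1:ℝ) + 1/2) * huv
  have hy1 : (c.2:ℝ) + 1/2 ≤ p.2 := by linarith
  have hy2 : p.2 ≤ (c.2:ℝ) + 3/2 := by linarith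
  intro a b ha1 ha2 hb1 hb2
  have B1 : b < c.2 + 2 := by exact_mod_cast (show (b:ℝ) < (c.2:ℝ) + 2 by push_cast; linarith)
  have B2 : c.2 - 1 < b := by exact_mod_cast (show (c.2:ℝ) - 1 < b by push_cast; linarith)
  have A1 : a < c.1 + 1 := by exact_mod_cast (show (a:ℝ) < (c.1:ℝ) + 1 by push_cast; linarith)
  have A2 : c.1 - 1 < a := by exact_mod_cast (show (c.1:ℝ) - 1 < a by push_cast; linarith)
  have ha : a = c.1 := by omega
  have hb : b = c.2 ∨ b = c.2 + 1 := by omega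
  rcases hb with hb | hb
  · have : (a, b) = c := Prod.ext ha hb
    rwa [this]
  · have : (a, b) = (c.1, c.2 + 1) := Prod.ext ha hb
    rwa [this]

theorem free_patrolling_region_eq (S : Finset (ℤ × ℤ)) (hne : S.Nonempty) :
    {p : ℝ × ℝ | Metric.closedBall p (1 / 2) ⊆ gridDomain S} =
      (⋃ c ∈ S, {cellCenter c}) ∪
      (⋃ c ∈ S, ⋃ d ∈ S, ⋃ (_ : AdjCells c d), segment ℝ (cellCenter c) (cellCenter d)) ∪
      (⋃ (v : ℤ × ℤ) (_ : v ∈ S ∧ v + (1, 0) ∈ S ∧ v + (0, 1) ∈ S ∧ v + (1, 1) ∈ S),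
        Set.Icc ((v.1 : ℝ) + 1 / 2) ((v.1 : ℝ) + 3 / 2) ×ˢ
          Set.Icc ((v.2 : ℝ) + 1 / 2) ((v.2 : ℝ) + 3 / 2)) := by
  ext p
  simp only [Set.mem_setOf_eq, key, Set.mem_union, Set.mem_iUnion, Set.mem_singleton_iff,
    exists_prop]
  constructor
  · intro h
    by_cases hx : ∃ a : ℤ, p.1 = (a:ℝ) + 1/2
    · obtain ⟨a, hxa⟩ := hx
      by_cases hy : ∃ b : ℤ, p.2 = (b:ℝ) + 1/2
      · obtain ⟨b, hyb⟩ := hy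
        left; left
        refine ⟨(a, b), h a b (by rw [hxa]; linarith) (by rw [hxa]; linarith)
          (by rw [hyb]; linarith) (by rw [hyb]; linarith), Prod.ext hxa hyb⟩
      · -- vertical segment
        set b := ⌊p.2 - 1/2⌋ with hbdef
        have hb1 : (b:ℝ) ≤ p.2 - 1/2 := Int.floor_le _
        have hb1' : (b:ℝ) < p.2 - 1/2 :=
          lt_of_le_of_ne hb1 (fun heq => hy ⟨b, by linarith⟩)
        have hb2 : p.2 - 1/2 < b + 1 := Int.lt_floor_add_one _
        have hcS : (a, b) ∈ S := h a b (by rw [hxa]; linarith) (by rw [hxa]; linarith)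
          (by linarith) (by linarith)
        have hdS : (a, b + 1) ∈ S := h a (b + 1) (by rw [hxa]; linarith)
          (by rw [hxa]; linarith) (by push_cast; linarith) (by push_cast; linarith)
        left; right
        refine ⟨(a, b), hcS, (a, b + 1), hdS, by simp [AdjCells], ?_⟩
        refine ⟨(b:ℝ) + 3/2 - p.2, p.2 - ((b:ℝ) + 1/2), by linarith, by linarith, by ring, ?_⟩
        simp only [cellCenter, Prod.smul_mk, Prod.mk_add_mk, smul_eq_mul, Prod.ext_iff]
        push_cast
        constructor
        · rw [hxa]; ring
        · ring
    · by_cases hy : ∃ b : ℤ, p.2 = (b:ℝ) + 1/2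
      · obtain ⟨b, hyb⟩ := hy
        set a := ⌊p.1 - 1/2⌋ with hadef
        have ha1 : (a:ℝ) ≤ p.1 - 1/2 := Int.floor_le _
        have ha1' : (a:ℝ) < p.1 - 1/2 :=
          lt_of_le_of_ne ha1 (fun heq => hx ⟨a, by linarith⟩)
        have ha2 : p.1 - 1/2 < a + 1 := Int.lt_floor_add_one _
        have hcS : (a, b) ∈ S := h a b (by linarith) (by linarith)
          (by rw [hyb]; linarith) (by rw [hyb]; linarith)
        have hdS : (a + 1, b) ∈ S := h (a + 1) b (by push_cast; linarith)
          (by push_cast; linarith) (by rw [hyb]; linarith) (by rw [hyb]; linarith)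
        left; right
        refine ⟨(a, b), hcS, (a + 1, b), hdS, by simp [AdjCells], ?_⟩
        refine ⟨(a:ℝ) + 3/2 - p.1, p.1 - ((a:ℝ) + 1/2), by linarith, by linarith, by ring, ?_⟩
        simp only [cellCenter, Prod.smul_mk, Prod.mk_add_mk, smul_eq_mul, Prod.ext_iff]
        push_cast
        constructor
        · ring
        · rw [hyb]; ring
      · set a := ⌊p.1 - 1/2⌋ with hadef
        set b := ⌊p.2 - 1/2⌋ with hbdef
        have ha1 : (a:ℝ) ≤ p.1 - 1/2 := Int.floor_le _
        have ha1' : (a:ℝ) < p.1 - 1/2 :=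
          lt_of_le_of_ne ha1 (fun heq => hx ⟨a, by linarith⟩)
        have ha2 : p.1 - 1/2 < a + 1 := Int.lt_floor_add_one _
        have hb1 : (b:ℝ) ≤ p.2 - 1/2 := Int.floor_le _
        have hb1' : (b:ℝ) < p.2 - 1/2 :=
          lt_of_le_of_ne hb1 (fun heq => hy ⟨b, by linarith⟩)
        have hb2 : p.2 - 1/2 < b + 1 := Int.lt_floor_add_one _
        right
        refine ⟨(a, b), ⟨h a b (by linarith) (by linarith) (by linarith) (by linarith), ?_, ?_, ?_⟩,
          ⟨⟨by linarith, by linarith⟩, ⟨by linarith, by linarith⟩⟩⟩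
        · have e : ((a, b) : ℤ × ℤ) + (1, 0) = (a + 1, b) := by
            simp [Prod.ext_iff]
          rw [e]
          exact h (a + 1) b (by push_cast; linarith) (by push_cast; linarith)
            (by linarith) (by linarith)
        · have e : ((a, b) : ℤ × ℤ) + (0, 1) = (a, b + 1) := by
            simp [Prod.ext_iff]
          rw [e]
          exact h a (b + 1) (by linarith) (by linarith)
            (by push_cast; linarith) (by push_cast; linarith)
        · have e : ((a, b) : ℤ × ℤ) + (1, 1) = (a + 1, b + 1) := by
            simp [Prod.ext_iff]
          rw [e]
          exact h (a + 1) (b + 1) (by push_cast; linarith) (by push_cast; linarith)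
            (by push_cast; linarith) (by push_cast; linarith)
  · rintro ((⟨c, hcS, rfl⟩ | ⟨c, hcS, d, hdS, hadj, hseg⟩) | ⟨v, ⟨h1, h2, h3, h4⟩, hp1, hp2⟩)
    · intro a b ha1 ha2 hb1 hb2
      simp only [cellCenter] at ha1 ha2 hb1 hb2
      have A1 : a < c.1 + 1 := by
        exact_mod_cast (show (a:ℝ) < (c.1:ℝ) + 1 by push_cast; linarith)
      have A2 : c.1 - 1 < a := by
        exact_mod_cast (show (c.1:ℝ) - 1 < a by push_cast; linarith)
      have B1 : b < c.2 + 1 := by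
        exact_mod_cast (show (b:ℝ) < (c.2:ℝ) + 1 by push_cast; linarith)
      have B2 : c.2 - 1 < b := by
        exact_mod_cast (show (c.2:ℝ) - 1 < b by push_cast; linarith)
      have : (a, b) = c := Prod.ext (by omega) (by omega)
      rwa [this]
    · rw [AdjCells, Int.abs_eq_natAbs, Int.abs_eq_natAbs] at hadj
      have hcd : (c.1 = d.1 ∧ (d.2 = c.2 + 1 ∨ c.2 = d.2 + 1)) ∨
          (c.2 = d.2 ∧ (d.1 = c.1 + 1 ∨ c.1 = d.1 + 1)) := by omega
      rcases hcd with ⟨e1, e2 | e2⟩ | ⟨e1, e2 | e2⟩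
      · have hd' : d = (c.1, c.2 + 1) := Prod.ext (by omega) (by omega)
        rw [hd'] at hseg hdS
        exact seg_vert S c hcS hdS hseg
      · have hc' : c = (d.1, d.2 + 1) := Prod.ext (by omega) (by omega)
        rw [segment_symm] at hseg
        rw [hc'] at hseg hcS
        exact seg_vert S d hdS hcS hseg
      · have hd' : d = (c.1 + 1, c.2) := Prod.ext (by omega) (by omega)
        rw [hd'] at hseg hdS
        exact seg_horiz S c hcS hdS hseg
      · have hc' : c = (d.1 + 1, d.2) := Prod.ext (by omega) (by omega)
        rw [segment_symm] at hseg
        rw [hc'] at hseg hcS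
        exact seg_horiz S d hdS hcS hseg
    · intro a b ha1 ha2 hb1 hb2
      obtain ⟨hp1a, hp1b⟩ := hp1
      obtain ⟨hp2a, hp2b⟩ := hp2
      have A1 : a < v.1 + 2 := by
        exact_mod_cast (show (a:ℝ) < (v.1:ℝ) + 2 by push_cast; linarith)
      have A2 : v.1 - 1 < a := by
        exact_mod_cast (show (v.1:ℝ) - 1 < a by push_cast; linarith)
      have B1 : b < v.2 + 2 := by
        exact_mod_cast (show (b:ℝ) < (v.2:ℝ) + 2 by push_cast; linarith)
      have B2 : v.2 - 1 < b := by
        exact_mod_cast (show (v.2:ℝ) - 1 < b by push_cast; linarith)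
      have ha : a = v.1 ∨ a = v.1 + 1 := by omega
      have hb : b = v.2 ∨ b = v.2 + 1 := by omega
      rcases ha with ha | ha <;> rcases hb with hb | hb
      · have : (a, b) = v := Prod.ext ha hb
        rwa [this]
      · have : (a, b) = v + (0, 1) := Prod.ext (by simp; omega) (by simp; omega)
        rwa [this]
      · have : (a, b) = v + (1, 0) := Prod.ext (by simp; omega) (by simp; omega)
        rwa [this]
      · have : (a, b) = v + (1, 1) := Prod.ext (by simp; omega) (by simp; omega)
        rwa [this]
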